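/- Let (X,d) be an unbounded metric space, p∈X, and let n≥2 be an integer. Then the following are equivalent: (1) the inequality |C| ≤ n holds for every clique C of the cluster graph G_{X,r̃}, for every scaling sequence r̃; (2) F_n(x_1,…,x_n) tends to 0 as max_{1≤k≤n} d(x_k,p) tends to ∞, where F_n(x_1,…,x_n) := (min_{1≤k≤n} d(x_k,p) · Π_{1≤k<l≤n} d(x_k,x_l)) / (max_{1≤k≤n} d(x_k,p))^{n(n−1)/2+1} for (x_1,…,x_n)≠(p,…,p) and F_n(p,…,p):=0. -/

import Mathlib

open Filter Topology
open scoped Classical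

/-- An unbounded metric space. -/
def UnboundedSpace (X : Type*) [MetricSpace X] : Prop :=
  ¬ Bornology.IsBounded (Set.univ : Set X)

/-- A scaling sequence: positive reals tending to infinity. -/
def ScalingSeq (r : ℕ → ℝ) : Prop :=
  (∀ n, 0 < r n) ∧ Filter.Tendsto r Filter.atTop Filter.atTop

/-- Two sequences are mutually stable w.r.t. `r` if `d(x_n, y_n)/r_n` has a finite limit. -/
def MutuallyStable {X : Type*} [MetricSpace X] (r : ℕ → ℝ) (x y : ℕ → X) : Prop :=
  ∃ L : ℝ, Filter.Tendsto (fun n => dist (x n) (y n) / r n) Filter.atTop (nhds L)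

/-- `Seq(X, r̃)`: sequences going to infinity such that `d(x_n, p)/r_n` has a finite limit. -/
def SeqInf {X : Type*} [MetricSpace X] (r : ℕ → ℝ) (p : X) : Set (ℕ → X) :=
  {x | Filter.Tendsto (fun n => dist (x n) p) Filter.atTop Filter.atTop ∧
    ∃ L : ℝ, Filter.Tendsto (fun n => dist (x n) p / r n) Filter.atTop (nhds L)}

/-- The relation `x̃ ≡ ỹ`, i.e. `d(x_n, y_n)/r_n → 0`. -/
def EquivSeq {X : Type*} [MetricSpace X] (r : ℕ → ℝ) (x y : ℕ → X) : Prop :=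
  Filter.Tendsto (fun n => dist (x n) (y n) / r n) Filter.atTop (nhds 0)

/-- The `≡`-equivalence class of `x` inside `Seq(X, r̃)`. -/
def classOf {X : Type*} [MetricSpace X] (r : ℕ → ℝ) (p : X) (x : ℕ → X) : Set (ℕ → X) :=
  {y | y ∈ SeqInf r p ∧ EquivSeq r x y}

/-- The vertex set of the cluster graph `G_{X, r̃}`: all `≡`-classes of `Seq(X, r̃)`. -/
def VertexSet {X : Type*} [MetricSpace X] (r : ℕ → ℝ) (p : X) : Set (Set (ℕ → X)) :=
  {v | ∃ x ∈ SeqInf r p, v = classOf r p x}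

/-- Adjacency in the cluster graph `G_{X, r̃}`: distinct classes whose representatives
are mutually stable. -/
def AdjacentCl {X : Type*} [MetricSpace X] (r : ℕ → ℝ) (p : X) (u v : Set (ℕ → X)) : Prop :=
  u ∈ VertexSet r p ∧ v ∈ VertexSet r p ∧ u ≠ v ∧
    ∀ x ∈ u, ∀ y ∈ v, MutuallyStable r x y

/-- The weight `ρ_X` on the cluster graph: for an edge `{u,v}` it is the (unique) limit
`lim d(x_n, y_n)/r_n` for representatives. -/
noncomputable def rhoX {X : Type*} [MetricSpace X] (r : ℕ → ℝ) (u v : Set (ℕ → X)) : ℝ :=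
  sSup {L : ℝ | ∃ x ∈ u, ∃ y ∈ v,
    Filter.Tendsto (fun n => dist (x n) (y n) / r n) Filter.atTop (nhds L)}

/-- The root `ν₀ = X̃⁰_{∞,r̃}`: sequences with `d(z_n,p) → ∞` and `d(z_n,p)/r_n → 0`. -/
def rootClass {X : Type*} [MetricSpace X] (r : ℕ → ℝ) (p : X) : Set (ℕ → X) :=
  {z | Filter.Tendsto (fun n => dist (z n) p) Filter.atTop Filter.atTop ∧
    Filter.Tendsto (fun n => dist (z n) p / r n) Filter.atTop (nhds 0)}

/-- The labeling `ρ⁰` of vertices: `ρ⁰(v) = lim d(x_n,p)/r_n` for `x̃ ∈ v`. -/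
noncomputable def rho0 {X : Type*} [MetricSpace X] (r : ℕ → ℝ) (p : X)
    (v : Set (ℕ → X)) : ℝ :=
  sSup {L : ℝ | ∃ x ∈ v, Filter.Tendsto (fun n => dist (x n) p / r n) Filter.atTop (nhds L)}

/-- A self-stable family: a subset of `Seq(X, r̃)` any two of whose members are
mutually stable. -/
def SelfStable {X : Type*} [MetricSpace X] (r : ℕ → ℝ) (p : X) (F : Set (ℕ → X)) : Prop :=
  F ⊆ SeqInf r p ∧ ∀ x ∈ F, ∀ y ∈ F, MutuallyStable r x y

/-- A maximal self-stable set `X̃_{∞, r̃}`. -/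
def MaxSelfStable {X : Type*} [MetricSpace X] (r : ℕ → ℝ) (p : X) (F : Set (ℕ → X)) : Prop :=
  SelfStable r p F ∧ ∀ F', SelfStable r p F' → F ⊆ F' → F = F'

/-- The pretangent space `Ω^X_{∞,r̃}` attached to a maximal self-stable set `F`:
the set of `≡`-classes of members of `F`. -/
def PretangentCl {X : Type*} [MetricSpace X] (r : ℕ → ℝ) (F : Set (ℕ → X)) :
    Set (Set (ℕ → X)) :=
  {v | ∃ x ∈ F, v = {y | y ∈ F ∧ EquivSeq r x y}}

/-- A clique in the cluster graph `G_{X, r̃}`. -/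
def IsCliqueCl {X : Type*} [MetricSpace X] (r : ℕ → ℝ) (p : X)
    (C : Set (Set (ℕ → X))) : Prop :=
  C ⊆ VertexSet r p ∧ ∀ u ∈ C, ∀ v ∈ C, u ≠ v → AdjacentCl r p u v

/-- The function `F_n` of Theorem t2.2.1. -/
noncomputable def FnFun {X : Type*} [MetricSpace X] (p : X) (n : ℕ) (x : Fin n → X) : ℝ :=
  if ∀ k, x k = p then 0
  else (⨅ k, dist (x k) p) *
      (∏ k : Fin n, ∏ l : Fin n, if k < l then dist (x k) (x l) else 1) /
      (⨆ k, dist (x k) p) ^ (n * (n - 1) / 2 + 1)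

/-- The condition that `F_n(x_1, …, x_n) → 0` as `max_k d(x_k, p) → ∞`. -/
def CondF {X : Type*} [MetricSpace X] (p : X) (n : ℕ) : Prop :=
  ∀ ε : ℝ, 0 < ε → ∃ M : ℝ, ∀ x : Fin n → X,
    M ≤ (⨆ k, dist (x k) p) → |FnFun p n x| < ε

/-- The annulus `A(p, R, k) = {x : R/k ≤ d(x,p) ≤ R·k}`; `A(p, R, 1)` is the sphere
`S(p, R)`. -/
def annulus {X : Type*} [MetricSpace X] (p : X) (R k : ℝ) : Set X :=
  {x | R / k ≤ dist x p ∧ dist x p ≤ R * k}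

/-- `Ψ(k) = limsup_{R → ∞} diam(A(p, R, k)) / R` (with `diam ∅ = 0`). -/
noncomputable def Psi {X : Type*} [MetricSpace X] (p : X) (k : ℝ) : ℝ :=
  Filter.limsup (fun R : ℝ => Metric.diam (annulus p R k) / R) Filter.atTop

/-- The condition `lim_{k→1⁺} limsup_{R→∞} diam(A(p,R,k))/R
= limsup_{R→∞} diam(S(p,R))/R = 0`. -/
def CondA {X : Type*} [MetricSpace X] (p : X) : Prop :=
  Filter.Tendsto (fun k => Psi p k) (nhdsWithin 1 (Set.Ioi 1)) (nhds 0) ∧ Psi p 1 = 0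

/-!
If `F_n` does not tend to `0`, normalise bad `n`-tuples by their largest distance to `p` and pass
to a subsequence along which all normalised distances converge. Since `F_n` is invariant under
scaling all distances, it converges to `F_n` of the limiting distances, which is therefore nonzero:
all limits are positive, so the `n` coordinate sequences, together with any sequence of the root
class, represent `n + 1` pairwise adjacent vertices. Conversely, among `n + 1` pairwise adjacent
vertices at most one has label `0`; representatives of the other `n` give tuples escaping to
infinity along which `F_n` converges to a positive number.
-/

section FiniteLimits

variable {α ι L : Type*} [Fintype ι] [Nonempty ι] [ConditionallyCompleteLattice L]
  [TopologicalSpace L] {l : Filter α} {f : ι → α → L} {g : ι → L}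

lemma Filter.Tendsto.ciInf_nhds_apply [ContinuousInf L] (hf : ∀ i, Tendsto (f i) l (𝓝 (g i))) :
    Tendsto (fun t => ⨅ i, f i t) l (𝓝 (⨅ i, g i)) := by
  simpa only [← Finset.inf'_univ_eq_ciInf] using
    Tendsto.finset_inf'_nhds_apply Finset.univ_nonempty fun i _ => hf i

lemma Filter.Tendsto.ciSup_nhds_apply [ContinuousSup L] (hf : ∀ i, Tendsto (f i) l (𝓝 (g i))) :
    Tendsto (fun t => ⨆ i, f i t) l (𝓝 (⨆ i, g i)) := by
  simpa only [← Finset.sup'_univ_eq_ciSup] using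
    Tendsto.finset_sup'_nhds_apply Finset.univ_nonempty fun i _ => hf i

end FiniteLimits

lemma prod_prod_ite_lt_const {M : Type*} [CommMonoid M] (n : ℕ) (c : M) :
    (∏ k : Fin n, ∏ l : Fin n, if k < l then c else 1) = c ^ (n * (n - 1) / 2) := by
  have hrow (k : Fin n) : (∏ l : Fin n, if k < l then c else 1) = c ^ (n - 1 - k : ℕ) := by
    rw [Finset.prod_ite, Finset.prod_const_one, mul_one, Finset.prod_const,
      Finset.filter_lt_eq_Ioi, Fin.card_Ioi]
  simp_rw [hrow, Finset.prod_pow_eq_pow_sum, Fin.sum_univ_eq_sum_range (fun k => n - 1 - k),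
    Finset.sum_range_reflect (fun k => k) n, Finset.sum_range_id]

/-- `FnFun` away from `(p, …, p)`, in terms of `d k = d(x_k, p)` and `e k l = d(x_k, x_l)`. -/
noncomputable def fnFormula (n : ℕ) (d : Fin n → ℝ) (e : Fin n → Fin n → ℝ) : ℝ :=
  (⨅ k, d k) * (∏ k : Fin n, ∏ l : Fin n, if k < l then e k l else 1) /
    (⨆ k, d k) ^ (n * (n - 1) / 2 + 1)

lemma fnFormula_mul_left {n : ℕ} {c : ℝ} (hc : 0 < c) (d : Fin n → ℝ)
    (e : Fin n → Fin n → ℝ) :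
    fnFormula n (fun k => c * d k) (fun k l => c * e k l) = fnFormula n d e := by
  have hprod : (∏ k : Fin n, ∏ l : Fin n, if k < l then c * e k l else 1) =
      c ^ (n * (n - 1) / 2) * ∏ k : Fin n, ∏ l : Fin n, if k < l then e k l else 1 := by
    rw [← prod_prod_ite_lt_const, ← Finset.prod_mul_distrib]
    refine Finset.prod_congr rfl fun k _ => ?_
    rw [← Finset.prod_mul_distrib]
    refine Finset.prod_congr rfl fun l _ => ?_
    split_ifs <;> simp
  rw [fnFormula, fnFormula, ← Real.mul_iInf_of_nonneg hc.le, ← Real.mul_iSup_of_nonneg hc.le,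
    hprod, mul_pow, pow_succ c]
  field_simp

lemma tendsto_fnFormula {α : Type*} {l : Filter α} {n : ℕ} [NeZero n] {d : α → Fin n → ℝ}
    {e : α → Fin n → Fin n → ℝ} {a : Fin n → ℝ} {c : Fin n → Fin n → ℝ}
    (hd : ∀ k, Tendsto (fun t => d t k) l (𝓝 (a k)))
    (he : ∀ k k', Tendsto (fun t => e t k k') l (𝓝 (c k k'))) (ha : ⨆ k, a k ≠ 0) :
    Tendsto (fun t => fnFormula n (d t) (e t)) l (𝓝 (fnFormula n a c)) := by
  refine ((Tendsto.ciInf_nhds_apply hd).mul (tendsto_finsetProd _ fun k _ =>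
    tendsto_finsetProd _ fun k' _ => ?_)).div ((Tendsto.ciSup_nhds_apply hd).pow _)
    (pow_ne_zero _ ha)
  split_ifs
  · exact he k k'
  · exact tendsto_const_nhds

section Formula

variable {n : ℕ} [NeZero n] {a : Fin n → ℝ} {c : Fin n → Fin n → ℝ}

lemma fnFormula_pos (ha : ∀ k, 0 < a k) (hc : ∀ k k', k < k' → 0 < c k k') :
    0 < fnFormula n a c := by
  obtain ⟨k₀, hk₀⟩ := exists_eq_ciInf_of_finite (f := a)
  obtain ⟨k₁, hk₁⟩ := exists_eq_ciSup_of_finite (f := a)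
  have hprod : 0 < ∏ k : Fin n, ∏ k' : Fin n, if k < k' then c k k' else 1 :=
    Finset.prod_pos fun k _ => Finset.prod_pos fun k' _ => by
      split_ifs with h
      exacts [hc k k' h, one_pos]
  rw [fnFormula, ← hk₀, ← hk₁]
  have := ha k₀
  have := ha k₁
  positivity

lemma pos_of_fnFormula_ne_zero (ha : ∀ k, 0 ≤ a k) (hc : ∀ k k', 0 ≤ c k k')
    (h : fnFormula n a c ≠ 0) : (∀ k, 0 < a k) ∧ ∀ k k', k < k' → 0 < c k k' := by
  simp only [fnFormula, div_ne_zero_iff, mul_ne_zero_iff, Finset.prod_ne_zero_iff,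
    Finset.mem_univ, forall_const] at h
  obtain ⟨⟨hinf, hprod⟩, -⟩ := h
  refine ⟨fun k => ?_, fun k k' hkk' => (hc k k').lt_of_ne' (by simpa [hkk'] using hprod k k')⟩
  exact ((le_ciInf ha).lt_of_ne' hinf).trans_le (ciInf_le (Finite.bddBelow_range a) k)

end Formula

section ClusterGraph

variable {X : Type*} [MetricSpace X] {r : ℕ → ℝ} {p : X}

lemma equivSeq_refl (x : ℕ → X) : EquivSeq r x x := by
  simp [EquivSeq]

lemma EquivSeq.symm {x y : ℕ → X} (h : EquivSeq r x y) : EquivSeq r y x := by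
  simpa [EquivSeq, dist_comm] using h

lemma tendsto_dist_div_of_equivSeq {x x' y y' : ℕ → X} {L : ℝ} (hx : EquivSeq r x x')
    (hy : EquivSeq r y y') (h : Tendsto (fun m => dist (x m) (y m) / r m) atTop (𝓝 L)) :
    Tendsto (fun m => dist (x' m) (y' m) / r m) atTop (𝓝 L) := by
  refine h.congr_dist (squeeze_zero (fun _ => dist_nonneg) (fun m => ?_) (by
    simpa using hx.abs.add hy.abs))
  rw [Real.dist_eq, ← sub_div, abs_div, abs_div, abs_div, abs_dist, abs_dist, ← add_div]
  exact div_le_div_of_nonneg_right (dist_dist_dist_le _ _ _ _) (abs_nonneg _)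

lemma mem_classOf_self {x : ℕ → X} (hx : x ∈ SeqInf r p) : x ∈ classOf r p x :=
  ⟨hx, equivSeq_refl x⟩

lemma classOf_eq_of_equivSeq {x y : ℕ → X} (h : EquivSeq r x y) :
    classOf r p x = classOf r p y := by
  ext z
  exact ⟨fun ⟨hz, hxz⟩ => ⟨hz, tendsto_dist_div_of_equivSeq h (equivSeq_refl z) hxz⟩,
    fun ⟨hz, hyz⟩ => ⟨hz, tendsto_dist_div_of_equivSeq h.symm (equivSeq_refl z) hyz⟩⟩

lemma mem_seqInf_of_tendsto_pos (hr : ScalingSeq r) {x : ℕ → X} {a : ℝ} (ha : 0 < a)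
    (hx : Tendsto (fun m => dist (x m) p / r m) atTop (𝓝 a)) : x ∈ SeqInf r p :=
  ⟨(hx.pos_mul_atTop ha hr.2).congr fun m => div_mul_cancel₀ _ (hr.1 m).ne', a, hx⟩

/-- Representatives of pairwise distinct, pairwise adjacent vertices of the cluster graph. -/
def IsSeparatedFamily {ι : Type*} (r : ℕ → ℝ) (p : X) (x : ι → ℕ → X) : Prop :=
  (∀ i, x i ∈ SeqInf r p) ∧ ∀ i j, i ≠ j →
    ∃ L, 0 < L ∧ Tendsto (fun m => dist (x i m) (x j m) / r m) atTop (𝓝 L)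

namespace IsSeparatedFamily

variable {ι : Type*} {x : ι → ℕ → X}

lemma comp (hx : IsSeparatedFamily r p x) {κ : Type*} {f : κ → ι} (hf : Function.Injective f) :
    IsSeparatedFamily r p (x ∘ f) :=
  ⟨fun k => hx.1 (f k), fun _ _ hkk' => hx.2 _ _ (hf.ne hkk')⟩

lemma cons {n : ℕ} {w : ℕ → X} {y : Fin n → ℕ → X} (hw : w ∈ SeqInf r p)
    (hy : IsSeparatedFamily r p y)
    (hwy : ∀ k, ∃ L, 0 < L ∧ Tendsto (fun m => dist (w m) (y k m) / r m) atTop (𝓝 L)) :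
    IsSeparatedFamily r p (Fin.cons w y : Fin (n + 1) → ℕ → X) := by
  refine ⟨Fin.cases hw hy.1, Fin.cases (Fin.cases (by simp) fun k _ => hwy k) fun k => ?_⟩
  refine Fin.cases (fun _ => ?_) fun k' hkk' => hy.2 k k' (by simpa using hkk')
  obtain ⟨L, hL, hlim⟩ := hwy k
  exact ⟨L, hL, by simpa [dist_comm] using hlim⟩

lemma injective_classOf (hx : IsSeparatedFamily r p x) :
    Function.Injective fun i => classOf r p (x i) := by
  intro i j hij
  by_contra hne
  obtain ⟨L, hL, hlim⟩ := hx.2 i j hne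
  have hmem : x j ∈ classOf r p (x i) := by
    rw [show classOf r p (x i) = classOf r p (x j) from hij]
    exact mem_classOf_self (hx.1 j)
  exact hL.ne' (tendsto_nhds_unique hlim hmem.2)

lemma isCliqueCl_range (hx : IsSeparatedFamily r p x) :
    IsCliqueCl r p (Set.range fun i => classOf r p (x i)) := by
  refine ⟨Set.range_subset_iff.2 fun i => ⟨x i, hx.1 i, rfl⟩, ?_⟩
  rintro _ ⟨i, rfl⟩ _ ⟨j, rfl⟩ hne
  obtain ⟨L, -, hlim⟩ := hx.2 i j fun h => hne (h ▸ rfl)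
  exact ⟨⟨x i, hx.1 i, rfl⟩, ⟨x j, hx.1 j, rfl⟩, hne,
    fun y hy y' hy' => ⟨L, tendsto_dist_div_of_equivSeq hy.2 hy'.2 hlim⟩⟩

lemma exists_isCliqueCl {k : ℕ} {x : Fin k → ℕ → X} (hx : IsSeparatedFamily r p x) :
    ∃ C, IsCliqueCl r p C ∧ (k : Cardinal) ≤ Cardinal.mk C := by
  refine ⟨_, hx.isCliqueCl_range, ?_⟩
  have := Cardinal.mk_range_eq_of_injective hx.injective_classOf
  simp only [Cardinal.mk_fin, Cardinal.lift_natCast, Cardinal.lift_eq_nat_iff] at this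
  exact this.ge

lemma exists_forall_ne_labels_pos [Nonempty ι] (hr : ∀ m, 0 < r m)
    (hx : IsSeparatedFamily r p x) :
    ∃ i₀, ∀ i ≠ i₀, ∃ a, 0 < a ∧
      Tendsto (fun m => dist (x i m) p / r m) atTop (𝓝 a) := by
  choose a ha using fun i => (hx.1 i).2
  have ha_nonneg (i) : 0 ≤ a i :=
    ge_of_tendsto' (ha i) fun m => div_nonneg dist_nonneg (hr m).le
  by_cases hpos : ∀ i, 0 < a i
  · exact ⟨Classical.arbitrary ι, fun i _ => ⟨a i, hpos i, ha i⟩⟩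
  push Not at hpos
  obtain ⟨i₀, hi₀⟩ := hpos
  refine ⟨i₀, fun i hi => ⟨a i, (ha_nonneg i).lt_of_ne fun hai => ?_, ha i⟩⟩
  obtain ⟨L, hL, hlim⟩ := hx.2 i i₀ hi
  have h0 : Tendsto (fun m => dist (x i m) (x i₀ m) / r m) atTop (𝓝 0) :=
    tendsto_dist_div_of_equivSeq (x := fun _ => p) (y := fun _ => p)
      (by simpa [EquivSeq, dist_comm, ← hai] using ha i)
      (by simpa [EquivSeq, dist_comm, le_antisymm hi₀ (ha_nonneg i₀)] using ha i₀)
      (by simp)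
  exact hL.ne' (tendsto_nhds_unique hlim h0)

end IsSeparatedFamily

lemma IsCliqueCl.exists_isSeparatedFamily (hr : ∀ m, 0 < r m) {C : Set (Set (ℕ → X))}
    (hC : IsCliqueCl r p C) {k : ℕ} (hk : (k : Cardinal) ≤ Cardinal.mk C) :
    ∃ x : Fin k → ℕ → X, IsSeparatedFamily r p x := by
  obtain ⟨e⟩ : Nonempty (Fin k ↪ C) := Cardinal.lift_mk_le'.1 (by simpa using hk)
  choose x hx hxe using fun i => hC.1 (e i).2
  refine ⟨x, hx, fun i j hij => ?_⟩
  have hne : (e i : Set (ℕ → X)) ≠ e j := fun h => hij (e.injective (Subtype.ext h))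
  obtain ⟨L, hlim⟩ := (hC.2 _ (e i).2 _ (e j).2 hne).2.2.2 _
    (hxe i ▸ mem_classOf_self (hx i)) _ (hxe j ▸ mem_classOf_self (hx j))
  refine ⟨L, (ge_of_tendsto' hlim fun m => div_nonneg dist_nonneg (hr m).le).lt_of_ne ?_, hlim⟩
  rintro rfl
  exact hne (by rw [hxe i, hxe j, classOf_eq_of_equivSeq hlim])

lemma UnboundedSpace.exists_lt_dist (hX : UnboundedSpace X) (p : X) (R : ℝ) :
    ∃ w : X, R < dist w p := by
  by_contra! h
  exact hX ((Metric.isBounded_iff_subset_closedBall p).2 ⟨R, fun w _ => h w⟩)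

/-- A witness is `m ↦ w i`, where `d(w i, p) > i` and `i ≤ m` is largest with
`(i + 1) d(w i, p) ≤ r m`. -/
lemma UnboundedSpace.rootClass_nonempty (hX : UnboundedSpace X) (p : X) (hr : ScalingSeq r) :
    (rootClass r p).Nonempty := by
  choose w hw using fun i : ℕ => hX.exists_lt_dist p i
  set P : ℕ → ℕ → Prop := fun m i => (i + 1) * dist (w i) p ≤ r m
  have hP (i : ℕ) : ∀ᶠ m in atTop, i ≤ m ∧ P m i :=
    (eventually_ge_atTop i).and (hr.2.eventually_ge_atTop _)
  set idx : ℕ → ℕ := fun m => Nat.findGreatest (P m) m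
  have hidx : Tendsto idx atTop atTop := tendsto_atTop.2 fun i =>
    (hP i).mono fun m hm => Nat.le_findGreatest hm.1 hm.2
  have hspec : ∀ᶠ m in atTop, P m (idx m) :=
    (hP 0).mono fun m hm => Nat.findGreatest_spec hm.1 hm.2
  refine ⟨fun m => w (idx m), tendsto_atTop_mono (fun m => (hw _).le)
    (tendsto_natCast_atTop_atTop.comp hidx), ?_⟩
  refine squeeze_zero' (.of_forall fun m => div_nonneg dist_nonneg (hr.1 m).le) ?_
    (tendsto_one_div_add_atTop_nhds_zero_nat.comp hidx)
  filter_upwards [hspec] with m hm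
  rw [Function.comp_apply, div_le_div_iff₀ (hr.1 m) (by positivity)]
  linarith

lemma IsSeparatedFamily.cons_of_mem_rootClass {n : ℕ} {w : ℕ → X} (hw : w ∈ rootClass r p)
    {y : Fin n → ℕ → X} (hy : IsSeparatedFamily r p y)
    (ha : ∀ k, ∃ a, 0 < a ∧ Tendsto (fun m => dist (y k m) p / r m) atTop (𝓝 a)) :
    IsSeparatedFamily r p (Fin.cons w y : Fin (n + 1) → ℕ → X) := by
  refine hy.cons ⟨hw.1, 0, hw.2⟩ fun k => ?_
  obtain ⟨a, ha, hlim⟩ := ha k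
  refine ⟨a, ha, tendsto_dist_div_of_equivSeq (x := fun _ => p) ?_ (equivSeq_refl _) ?_⟩
  · simpa [EquivSeq, dist_comm] using hw.2
  · simpa [dist_comm] using hlim

end ClusterGraph

section FnAsymptotics

variable {X : Type*} [MetricSpace X] {p : X} {n : ℕ} {r : ℕ → ℝ}

lemma FnFun_eq_fnFormula_div {x : Fin n → X} (hx : ¬ ∀ k, x k = p) {s : ℝ} (hs : 0 < s) :
    FnFun p n x = fnFormula n (fun k => dist (x k) p / s) (fun k l => dist (x k) (x l) / s) := by
  simp_rw [div_eq_inv_mul]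
  rw [fnFormula_mul_left (inv_pos.2 hs)]
  exact if_neg hx

lemma tendsto_FnFun [NeZero n] {s : ℕ → ℝ} (hs : ∀ m, 0 < s m) {y : Fin n → ℕ → X}
    {a : Fin n → ℝ} {c : Fin n → Fin n → ℝ}
    (ha : ∀ k, Tendsto (fun m => dist (y k m) p / s m) atTop (𝓝 (a k)))
    (hc : ∀ k k', Tendsto (fun m => dist (y k m) (y k' m) / s m) atTop (𝓝 (c k k')))
    (hsup : ⨆ k, a k ≠ 0) :
    Tendsto (fun m => FnFun p n fun k => y k m) atTop (𝓝 (fnFormula n a c)) := by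
  obtain ⟨k₀, hk₀⟩ := exists_eq_ciSup_of_finite (f := a)
  have hne : ∀ᶠ m in atTop, ¬ ∀ k, y k m = p := by
    filter_upwards [(ha k₀).eventually_ne (hk₀ ▸ hsup)] with m hm hall
    simp [hall k₀] at hm
  refine (tendsto_fnFormula ha hc hsup).congr' ?_
  filter_upwards [hne] with m hm
  exact (FnFun_eq_fnFormula_div hm (hs m)).symm

lemma exists_subseq_tendsto_dist_div {z : ℕ → Fin n → X} {R : ℕ → ℝ}
    (hR : ∀ j, 0 < R j) (hzR : ∀ j k, dist (z j k) p ≤ R j) :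
    ∃ φ : ℕ → ℕ, StrictMono φ ∧ ∃ (a : Fin n → ℝ) (c : Fin n → Fin n → ℝ),
      (∀ k, Tendsto (fun j => dist (z (φ j) k) p / R (φ j)) atTop (𝓝 (a k))) ∧
      ∀ k k', Tendsto (fun j => dist (z (φ j) k) (z (φ j) k') / R (φ j)) atTop
        (𝓝 (c k k')) := by
  have hmem (j : ℕ) : ((fun k => dist (z j k) p / R j, fun k k' => dist (z j k) (z j k') / R j) :
      (Fin n → ℝ) × (Fin n → Fin n → ℝ)) ∈ Set.Icc 0 (fun _ => 2, fun _ _ => 2) := by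
    have hnonneg {t : ℝ} (ht : 0 ≤ t) : 0 ≤ t / R j := div_nonneg ht (hR j).le
    refine ⟨⟨fun k => hnonneg dist_nonneg, fun k k' => hnonneg dist_nonneg⟩,
      ⟨fun k => ?_, fun k k' => ?_⟩⟩
    · rw [div_le_iff₀ (hR j)]
      linarith [hzR j k, hR j]
    · rw [div_le_iff₀ (hR j)]
      linarith [hzR j k, hzR j k', dist_triangle_right (z j k) (z j k') p]
  obtain ⟨lim, -, φ, hφ, hlim⟩ := tendsto_subseq_of_bounded (Metric.isBounded_Icc _ _) hmem
  exact ⟨φ, hφ, lim.1, lim.2, tendsto_pi_nhds.1 hlim.fst_nhds,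
    fun k => tendsto_pi_nhds.1 (tendsto_pi_nhds.1 hlim.snd_nhds k)⟩

lemma not_condF_of_isSeparatedFamily [NeZero n] (hr : ScalingSeq r) {y : Fin n → ℕ → X}
    (hy : IsSeparatedFamily r p y)
    (ha : ∀ k, ∃ a, 0 < a ∧ Tendsto (fun m => dist (y k m) p / r m) atTop (𝓝 a)) :
    ¬ CondF p n := by
  choose a ha_pos ha using ha
  have hc (k k' : Fin n) : ∃ c, (k ≠ k' → 0 < c) ∧
      Tendsto (fun m => dist (y k m) (y k' m) / r m) atTop (𝓝 c) := by
    by_cases hkk' : k = k'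
    · exact ⟨0, fun h => absurd hkk' h, by simp [hkk']⟩
    · obtain ⟨c, hc, hlim⟩ := hy.2 k k' hkk'
      exact ⟨c, fun _ => hc, hlim⟩
  choose c hc_pos hc using hc
  have hpos : 0 < fnFormula n a c := fnFormula_pos ha_pos fun k k' h => hc_pos k k' h.ne
  obtain ⟨k₀, hk₀⟩ := exists_eq_ciSup_of_finite (f := a)
  have hlim := tendsto_FnFun hr.1 ha hc (hk₀ ▸ (ha_pos k₀).ne')
  have hsup : Tendsto (fun m => ⨆ k, dist (y k m) p) atTop atTop :=
    tendsto_atTop_mono (fun m => le_ciSup (Finite.bddAbove_range _) 0) (hy.1 0).1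
  intro hF
  obtain ⟨M, hM⟩ := hF _ (half_pos hpos)
  obtain ⟨m, hmM, hmF⟩ := ((hsup.eventually_ge_atTop M).and
    (hlim.eventually (lt_mem_nhds (half_lt_self hpos)))).exists
  exact (hmF.trans_le (le_abs_self _)).not_gt (hM _ hmM)

lemma exists_isSeparatedFamily_of_not_condF [NeZero n] (hF : ¬ CondF p n) :
    ∃ r, ScalingSeq r ∧ ∃ y : Fin n → ℕ → X, IsSeparatedFamily r p y ∧
      ∀ k, ∃ a, 0 < a ∧ Tendsto (fun m => dist (y k m) p / r m) atTop (𝓝 a) := by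
  simp only [CondF, not_forall, not_exists, not_lt] at hF
  obtain ⟨ε, hε, hF⟩ := hF
  choose z hzR hzF using fun j : ℕ => hF (j + 1)
  set R : ℕ → ℝ := fun j => ⨆ k, dist (z j k) p
  have hR_pos (j : ℕ) : 0 < R j := by linarith [hzR j]
  obtain ⟨φ, hφ, a, c, ha, hc⟩ := exists_subseq_tendsto_dist_div hR_pos
    fun j k => le_ciSup (Finite.bddAbove_range fun k => dist (z j k) p) k
  have hR_top : Tendsto R atTop atTop :=
    tendsto_atTop_mono hzR (tendsto_atTop_add_const_right _ 1 tendsto_natCast_atTop_atTop)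
  have hr : ScalingSeq (R ∘ φ) := ⟨fun j => hR_pos _, hR_top.comp hφ.tendsto_atTop⟩
  have ha_nonneg (k : Fin n) : 0 ≤ a k :=
    ge_of_tendsto' (ha k) fun j => div_nonneg dist_nonneg (hR_pos _).le
  have hc_nonneg (k k' : Fin n) : 0 ≤ c k k' :=
    ge_of_tendsto' (hc k k') fun j => div_nonneg dist_nonneg (hR_pos _).le
  have hsup : ⨆ k, a k = 1 := by
    have h1 (j : ℕ) : ⨆ k, dist (z (φ j) k) p / R (φ j) = 1 := by
      simp_rw [div_eq_inv_mul]
      rw [← Real.mul_iSup_of_nonneg (inv_nonneg.2 (hR_pos _).le),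
        inv_mul_cancel₀ (hR_pos _).ne']
    exact tendsto_nhds_unique (Tendsto.ciSup_nhds_apply ha) (by simp only [h1, tendsto_const_nhds])
  have hlim := tendsto_FnFun (y := fun k j => z (φ j) k) hr.1 ha hc (by simp [hsup])
  have hne : fnFormula n a c ≠ 0 := by
    have := ge_of_tendsto' hlim.abs fun j => hzF (φ j)
    intro h
    rw [h, abs_zero] at this
    linarith
  obtain ⟨ha_pos, hc_pos⟩ := pos_of_fnFormula_ne_zero ha_nonneg hc_nonneg hne
  refine ⟨R ∘ φ, hr, fun k j => z (φ j) k,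
    ⟨fun k => mem_seqInf_of_tendsto_pos hr (ha_pos k) (ha k), fun k k' hkk' => ?_⟩,
    fun k => ⟨a k, ha_pos k, ha k⟩⟩
  rcases hkk'.lt_or_gt with h | h
  · exact ⟨c k k', hc_pos k k' h, hc k k'⟩
  · exact ⟨c k' k, hc_pos k' k h, by simpa only [dist_comm, Function.comp_apply] using hc k' k⟩

end FnAsymptotics

/-- Lemma l2.3.5n. Every clique of every cluster `G_{X,r̃}` has at
most `n` elements iff `F_n(x_1,…,x_n) → 0` as `max_k d(x_k,p) → ∞`. -/
theorem clique_card_le_iff {X : Type*} [MetricSpace X]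
    (hX : UnboundedSpace X) (p : X) (n : ℕ) (hn : 2 ≤ n) :
    (∀ r : ℕ → ℝ, ScalingSeq r → ∀ C : Set (Set (ℕ → X)),
        IsCliqueCl r p C → Cardinal.mk ↥C ≤ (n : Cardinal)) ↔
      CondF p n := by
  have : NeZero n := ⟨by omega⟩
  constructor
  · intro hclique
    by_contra hF
    obtain ⟨r, hr, y, hy, ha⟩ := exists_isSeparatedFamily_of_not_condF hF
    obtain ⟨w, hw⟩ := hX.rootClass_nonempty p hr
    obtain ⟨C, hC, hcard⟩ := (hy.cons_of_mem_rootClass hw ha).exists_isCliqueCl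
    have : ((n + 1 : ℕ) : Cardinal) ≤ n := hcard.trans (hclique r hr C hC)
    norm_cast at this
    omega
  · intro hF r hr C hC
    by_contra! hcard
    obtain ⟨x, hx⟩ := hC.exists_isSeparatedFamily hr.1 (k := n + 1)
      (by exact_mod_cast Cardinal.add_one_le_of_lt hcard)
    obtain ⟨i₀, hi₀⟩ := hx.exists_forall_ne_labels_pos hr.1
    exact not_condF_of_isSeparatedFamily hr (hx.comp (Fin.succAbove_right_injective (p := i₀)))
      (fun k => hi₀ _ (Fin.succAbove_ne i₀ k)) hF
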